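/- Characterization of the increase set: after inserting edge (u,v) with c_old = core(u,G) ≤ core(v,G), define for each w ∈ V_c the quantity cnt*(w) = |{x ∈ nbr(w, G') : core(x, G) > c_old or x ∈ V_c*}|. Then w ∈ V_c* if and only if cnt*(w) ≥ c_old + 1. -/
import Mathlib


variable {V : Type*} [Fintype V]

/-- The k-core of `G`, as the set of vertices contained in some subgraph
(vertex set) in which every vertex has at least `k` neighbors inside the set. -/
def coreSet (G : SimpleGraph V) (k : ℕ) : Set V :=
  {v | ∃ S : Set V, v ∈ S ∧ ∀ u ∈ S, k ≤ (S ∩ G.neighborSet u).ncard}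

/-- The core number of `v`: the largest `k` such that `v` belongs to the `k`-core. -/
noncomputable def coreNumber (G : SimpleGraph V) (v : V) : ℕ :=
  sSup {k | v ∈ coreSet G k}

lemma coreSet_anti (G : SimpleGraph V) {k l : ℕ} (h : k ≤ l) :
    coreSet G l ⊆ coreSet G k := by
  rintro v ⟨S, hv, hS⟩
  exact ⟨S, hv, fun x hx => h.trans (hS x hx)⟩

lemma coreSet_mono {G G' : SimpleGraph V} (h : G ≤ G') (k : ℕ) :
    coreSet G k ⊆ coreSet G' k := by
  rintro v ⟨S, hv, hS⟩
  refine ⟨S, hv, fun x hx => (hS x hx).trans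
    (Set.ncard_le_ncard (fun y hy => ⟨hy.1, h hy.2⟩) (Set.toFinite _))⟩

lemma core_bdd (G : SimpleGraph V) (v : V) : BddAbove {k | v ∈ coreSet G k} := by
  refine ⟨Fintype.card V, fun k hk => ?_⟩
  obtain ⟨S, hv, hS⟩ := hk
  calc k ≤ (S ∩ G.neighborSet v).ncard := hS v hv
    _ ≤ (Set.univ : Set V).ncard :=
        Set.ncard_le_ncard (Set.subset_univ _) (Set.toFinite _)
    _ = Fintype.card V := by simp [Set.ncard_univ, Nat.card_eq_fintype_card]

lemma mem_coreSet_coreNumber (G : SimpleGraph V) (v : V) :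
    v ∈ coreSet G (coreNumber G v) := by
  have h0 : v ∈ coreSet G 0 := ⟨{v}, rfl, fun x _ => Nat.zero_le _⟩
  exact Nat.sSup_mem ⟨0, h0⟩ (core_bdd G v)

lemma le_coreNumber {G : SimpleGraph V} {v : V} {k : ℕ} (h : v ∈ coreSet G k) :
    k ≤ coreNumber G v :=
  le_csSup (core_bdd G v) h

lemma mem_coreSet_of_le {G : SimpleGraph V} {v : V} {k : ℕ}
    (h : k ≤ coreNumber G v) : v ∈ coreSet G k :=
  coreSet_anti G h (mem_coreSet_coreNumber G v)

lemma coreSet_witness (G : SimpleGraph V) (k : ℕ) :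
    ∀ x ∈ coreSet G k, k ≤ (coreSet G k ∩ G.neighborSet x).ncard := by
  intro x hx
  obtain ⟨S, hxS, hS⟩ := hx
  have hsub : S ⊆ coreSet G k := fun y hy => ⟨S, hy, hS⟩
  exact (hS x hxS).trans
    (Set.ncard_le_ncard (fun y hy => ⟨hsub hy.1, hy.2⟩) (Set.toFinite _))

lemma coreSet_insert_le (G : SimpleGraph V) (u v : V) (k : ℕ) :
    coreSet (G ⊔ SimpleGraph.fromEdgeSet {s(u, v)}) (k + 1) ⊆ coreSet G k := by
  classical
  rintro x ⟨S, hxS, hS⟩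
  refine ⟨S, hxS, fun y hy => ?_⟩
  have hsub : S ∩ (G ⊔ SimpleGraph.fromEdgeSet {s(u, v)}).neighborSet y ⊆
      insert (if y = u then v else u) (S ∩ G.neighborSet y) := by
    rintro z ⟨hzS, hz⟩
    rw [SimpleGraph.mem_neighborSet, SimpleGraph.sup_adj] at hz
    rcases hz with h | h
    · exact Set.mem_insert_of_mem _ ⟨hzS, h⟩
    · rw [SimpleGraph.fromEdgeSet_adj] at h
      obtain ⟨hmem, hne⟩ := h
      simp only [Set.mem_singleton_iff, Sym2.eq, Sym2.rel_iff', Prod.mk.injEq,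
        Prod.swap_prod_mk] at hmem
      rcases hmem with ⟨hy, hz'⟩ | ⟨hy, hz'⟩
      · subst hy; subst hz'; simp
      · subst hy; subst hz'; simp [hne]
  have h1 := Set.ncard_le_ncard hsub (Set.toFinite _)
  have h2 := Set.ncard_insert_le (if y = u then v else u) (S ∩ G.neighborSet y)
  have h3 := hS y hy
  omega

lemma coreNumber_insert_le (G : SimpleGraph V) (u v x : V) :
    coreNumber (G ⊔ SimpleGraph.fromEdgeSet {s(u, v)}) x ≤ coreNumber G x + 1 := by
  by_contra h
  push_neg at h
  have hx : x ∈ coreSet (G ⊔ SimpleGraph.fromEdgeSet {s(u, v)}) (coreNumber G x + 2) :=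
    mem_coreSet_of_le (by omega)
  have h2 := le_coreNumber (coreSet_insert_le G u v (coreNumber G x + 1) hx)
  omega

theorem stmt17 (G : SimpleGraph V) (u v : V) (huv : u ≠ v) (hnadj : ¬ G.Adj u v)
    (hle : coreNumber G u ≤ coreNumber G v)
    (G' : SimpleGraph V) (hG' : G' = G ⊔ SimpleGraph.fromEdgeSet {s(u, v)})
    (Vc : Set V)
    (hVc : Vc = {w | Relation.ReflTransGen
      (fun a b => G'.Adj a b ∧ coreNumber G a = coreNumber G u ∧ coreNumber G b = coreNumber G u)
      u w})
    (Vcs : Set V) (hVcs : Vcs = {w ∈ Vc | coreNumber G' w = coreNumber G u + 1}) :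
    ∀ w ∈ Vc, (w ∈ Vcs ↔
      coreNumber G u + 1 ≤
        {x ∈ G'.neighborSet w | coreNumber G u < coreNumber G x ∨ x ∈ Vcs}.ncard) := by
  set c := coreNumber G u with hc
  have hVc_core : ∀ w ∈ Vc, coreNumber G w = c := by
    intro w hw
    rw [hVc] at hw
    induction hw with
    | refl => rfl
    | tail _ hstep _ => exact hstep.2.2
  have hins : ∀ x : V, coreNumber G' x ≤ coreNumber G x + 1 := by
    intro x; rw [hG']; exact coreNumber_insert_le G u v x
  have hmonoG : ∀ k, coreSet G k ⊆ coreSet G' k := by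
    intro k; rw [hG']; exact coreSet_mono le_sup_left k
  intro w hw
  constructor
  · intro hws
    rw [hVcs] at hws
    obtain ⟨-, hcore'⟩ := hws
    have hwK : w ∈ coreSet G' (c + 1) := by
      rw [← hcore']; exact mem_coreSet_coreNumber G' w
    refine le_trans (coreSet_witness G' (c + 1) w hwK)
      (Set.ncard_le_ncard ?_ (Set.toFinite _))
    rintro x ⟨hxK, hxN⟩
    refine ⟨hxN, ?_⟩
    have hx' : c + 1 ≤ coreNumber G' x := le_coreNumber hxK
    by_cases hxc : c < coreNumber G x
    · exact Or.inl hxc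
    · right
      push_neg at hxc
      have hle1 := hins x
      have hxeq : coreNumber G x = c := by omega
      have hx'eq : coreNumber G' x = c + 1 := by omega
      have hwVc : Relation.ReflTransGen
          (fun a b => G'.Adj a b ∧ coreNumber G a = c ∧ coreNumber G b = c) u w := by
        rw [hVc] at hw; exact hw
      have hxVc : x ∈ Vc := by
        rw [hVc]
        exact hwVc.tail ⟨hxN, hVc_core w hw, hxeq⟩
      rw [hVcs]
      exact ⟨hxVc, hx'eq⟩
  · intro hcnt
    rw [hVcs]
    refine ⟨hw, ?_⟩
    have hwc : coreNumber G w = c := hVc_core w hw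
    have hub : coreNumber G' w ≤ c + 1 := by have := hins w; omega
    have hsubK : {x ∈ G'.neighborSet w | c < coreNumber G x ∨ x ∈ Vcs} ⊆
        coreSet G' (c + 1) := by
      rintro x ⟨hxN, hx⟩
      rcases hx with h | h
      · exact hmonoG (c + 1) (mem_coreSet_of_le h)
      · rw [hVcs] at h
        rw [← h.2]
        exact mem_coreSet_coreNumber G' x
    have hwmem : w ∈ coreSet G' (c + 1) := by
      refine ⟨insert w (coreSet G' (c + 1)), Set.mem_insert _ _, ?_⟩
      intro y hy
      rcases Set.mem_insert_iff.mp hy with rfl | hyK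
      · refine hcnt.trans (Set.ncard_le_ncard ?_ (Set.toFinite _))
        rintro x ⟨hxN, hx⟩
        exact ⟨Set.mem_insert_of_mem _ (hsubK ⟨hxN, hx⟩), hxN⟩
      · exact (coreSet_witness G' (c + 1) y hyK).trans
          (Set.ncard_le_ncard (fun z hz => ⟨Set.mem_insert_of_mem _ hz.1, hz.2⟩)
            (Set.toFinite _))
    have := le_coreNumber hwmem
    omega
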